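/- Smoothness of the efficient score in the threshold a (case d = d'): for all thresholds a, ā ∈ ℝ and d ∈ {0,1}, ‖ ((1{D=d}/p_d(X))(Y_a − G_a(d,X)) + G_a(d,X)) − ((1{D=d}/p_d(X))(Y_ā − G_ā(d,X)) + G_ā(d,X)) ‖_{P,2} ≤ ( 1/ε₁ + (1+ε₁)/ε₁ ) · ‖Y_a − Y_ā‖_{P,2}, where G_a(D,X) is a version of P(Y ≤ a | D, X). -/

import Mathlib

/-! With `S = {D = d}`, `Δ = Y_a - Y_ā`, `g = E[Δ | D, X]` and `f = G_a(d, ·) - G_ā(d, ·)`, the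
difference of the two scores is `(1_S / p_d(X)) (Δ - g) + f(X)`, because `f(X) = g` on `S`.
The first term has `L²` norm at most `ε⁻¹ ‖Δ - g‖ ≤ ε⁻¹ ‖Δ‖`, as `Δ ↦ Δ - g` is an orthogonal
projection. For the second, `p_d(X) = E[1_S | X]` lets one trade the weight `p_d(X)` for `1_S`:
`E[f(X)²] = E[1_S f(X)² / p_d(X)] ≤ ε⁻¹ E[g²] ≤ ε⁻¹ E[Δ²]`, and `ε⁻¹ ≤ ((1 + ε) / ε)²`. -/

open MeasureTheory

theorem eLpNorm_two_pow_two_eq_lintegral {α E : Type*} [MeasurableSpace α] {μ : Measure α}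
    [NormedAddCommGroup E] (f : α → E) :
    eLpNorm f 2 μ ^ 2 = ∫⁻ x, ‖f x‖ₑ ^ 2 ∂μ := by
  simpa using eLpNorm_nnreal_pow_eq_lintegral (f := f) (μ := μ) (p := 2) two_ne_zero

theorem eLpNorm_sub_condExp_le {α : Type*} {m m₀ : MeasurableSpace α} {μ : Measure α}
    [IsFiniteMeasure μ] (hm : m ≤ m₀) {f : α → ℝ} (hf : MemLp f 2 μ) :
    eLpNorm (f - μ[f | m]) 2 μ ≤ eLpNorm f 2 μ := by
  have : Fact (m ≤ m₀) := ⟨hm⟩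
  set K := lpMeas ℝ ℝ m 2 μ
  have hae : f - μ[f | m] =ᵐ[μ] ⇑(hf.toLp f - K.starProjection (hf.toLp f)) := by
    filter_upwards [hf.coeFn_toLp, hf.condExpL2_ae_eq_condExp (𝕜 := ℝ) hm,
      Lp.coeFn_sub (hf.toLp f) (K.starProjection (hf.toLp f))] with x h₁ h₂ h₃
    rw [h₃, Pi.sub_apply, Pi.sub_apply, h₁, ← h₂]
    rfl
  rw [eLpNorm_congr_ae hae, ← eLpNorm_congr_ae hf.coeFn_toLp, ← Lp.enorm_def, ← Lp.enorm_def,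
    ← K.starProjection_orthogonal_val]
  exact enorm_le_iff_norm_le.mpr (Kᗮ.norm_starProjection_apply_le _)

theorem eLpNorm_mul_sub_condExp_le {α : Type*} {m m₀ : MeasurableSpace α} {μ : Measure α}
    [IsFiniteMeasure μ] (hm : m ≤ m₀) {f u : α → ℝ} (hf : MemLp f 2 μ) {c : ℝ}
    (hu : ∀ᵐ x ∂μ, |u x| ≤ c) :
    eLpNorm (fun x => u x * (f x - μ[f | m] x)) 2 μ ≤ ENNReal.ofReal c * eLpNorm f 2 μ :=
  calc _ ≤ ENNReal.ofReal c * eLpNorm (f - μ[f | m]) 2 μ :=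
        eLpNorm_le_mul_eLpNorm_of_ae_le_mul (hu.mono fun x hx => by
          rw [norm_mul, Real.norm_eq_abs, Pi.sub_apply]
          exact mul_le_mul_of_nonneg_right hx (norm_nonneg _)) 2
    _ ≤ _ := by
        gcongr
        exact eLpNorm_sub_condExp_le hm hf

section InversePropensityWeighting

variable {Ω 𝓧 : Type*} {m : MeasurableSpace Ω} [mΩ : MeasurableSpace Ω] [MeasurableSpace 𝓧]
  {P : Measure Ω} [IsFiniteMeasure P] {X : Ω → 𝓧} {w : 𝓧 → ℝ} {S : Set Ω} {ε : ℝ}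

theorem lintegral_ofReal_mul_comp_eq_of_ae_eq_condExp (hX : Measurable X)
    {ι : Ω → ℝ} (hι : Integrable ι P) (hι₀ : 0 ≤ᵐ[P] ι)
    (hw_eq : (fun ω => w (X ω)) =ᵐ[P] P[ι | MeasurableSpace.comap X inferInstance])
    {φ : 𝓧 → ENNReal} (hφ : Measurable φ) :
    ∫⁻ ω, ENNReal.ofReal (w (X ω)) * φ (X ω) ∂P = ∫⁻ ω, ENNReal.ofReal (ι ω) * φ (X ω) ∂P := by
  have hw₀ : 0 ≤ᵐ[P] fun ω => w (X ω) := (condExp_nonneg hι₀).trans_eq hw_eq.symm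
  have hwX : Integrable (fun ω => w (X ω)) P := integrable_condExp.congr hw_eq.symm
  have hmap : (P.withDensity fun ω => ENNReal.ofReal (w (X ω))).map X
      = (P.withDensity fun ω => ENNReal.ofReal (ι ω)).map X := by
    ext A hA
    rw [Measure.map_apply hX hA, Measure.map_apply hX hA,
      withDensity_apply _ (hX hA), withDensity_apply _ (hX hA),
      ← ofReal_integral_eq_lintegral_ofReal hwX.restrict (ae_restrict_of_ae hw₀),
      ← ofReal_integral_eq_lintegral_ofReal hι.restrict (ae_restrict_of_ae hι₀),
      setIntegral_congr_ae (hX hA) (hw_eq.mono fun ω h _ => h),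
      setIntegral_condExp hX.comap_le hι ⟨A, hA, rfl⟩]
  have hφX := congrArg (fun ν => ∫⁻ x, φ x ∂ν) hmap
  simp only [lintegral_map hφ hX] at hφX
  exact (lintegral_withDensity_eq_lintegral_mul₀ hwX.1.aemeasurable.ennreal_ofReal
      (hφ.comp hX).aemeasurable).symm.trans <| hφX.trans <|
    lintegral_withDensity_eq_lintegral_mul₀ hι.1.aemeasurable.ennreal_ofReal
      (hφ.comp hX).aemeasurable

theorem eLpNorm_comp_pow_two_le_of_ae_eq_condExp_indicator (hX : Measurable X)
    (hw : Measurable w) (hS : MeasurableSet S)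
    (hw_eq : (fun ω => w (X ω)) =ᵐ[P]
      P[S.indicator (1 : Ω → ℝ) | MeasurableSpace.comap X inferInstance])
    (hε : 0 < ε) (hw_ge : ∀ᵐ ω ∂P, ε ≤ w (X ω)) {h : 𝓧 → ℝ} (hh : Measurable h) :
    eLpNorm (fun ω => h (X ω)) 2 P ^ 2
      ≤ ENNReal.ofReal ε⁻¹ * eLpNorm (S.indicator fun ω => h (X ω)) 2 P ^ 2 := by
  set φ : 𝓧 → ENNReal := fun x => (ENNReal.ofReal (w x))⁻¹ * ‖h x‖ₑ ^ 2
  have hφ : Measurable φ := hw.ennreal_ofReal.inv.mul (hh.enorm.pow_const 2)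
  rw [eLpNorm_two_pow_two_eq_lintegral, eLpNorm_two_pow_two_eq_lintegral,
    ← lintegral_const_mul' _ _ ENNReal.ofReal_ne_top]
  calc ∫⁻ ω, ‖h (X ω)‖ₑ ^ 2 ∂P = ∫⁻ ω, ENNReal.ofReal (w (X ω)) * φ (X ω) ∂P := by
        refine lintegral_congr_ae (hw_ge.mono fun ω hω => ?_)
        dsimp only [φ]
        rw [ENNReal.mul_inv_cancel_left (by simpa using hε.trans_le hω) ENNReal.ofReal_ne_top]
    _ = ∫⁻ ω, ENNReal.ofReal (S.indicator (1 : Ω → ℝ) ω) * φ (X ω) ∂P :=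
        lintegral_ofReal_mul_comp_eq_of_ae_eq_condExp hX ((integrable_const 1).indicator hS)
          (.of_forall fun _ => Set.indicator_nonneg (fun _ _ => zero_le_one) _) hw_eq hφ
    _ ≤ ∫⁻ ω, ENNReal.ofReal ε⁻¹ * ‖S.indicator (fun ω => h (X ω)) ω‖ₑ ^ 2 ∂P := by
        refine lintegral_mono_ae (hw_ge.mono fun ω hω => ?_)
        by_cases hωS : ω ∈ S
        · simp only [Set.indicator_of_mem hωS, Pi.one_apply, ENNReal.ofReal_one, one_mul, φ,
            ENNReal.ofReal_inv_of_pos hε]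
          gcongr
        · simp [Set.indicator_of_notMem hωS]

theorem eLpNorm_indicator_div_mul_sub_add_comp_le (hX : Measurable X)
    (hw : Measurable w) (hS : MeasurableSet S)
    (hw_eq : (fun ω => w (X ω)) =ᵐ[P]
      P[S.indicator (1 : Ω → ℝ) | MeasurableSpace.comap X inferInstance])
    (hε : 0 < ε) (hw_ge : ∀ᵐ ω ∂P, ε ≤ w (X ω)) (hm : m ≤ mΩ) {Δ g : Ω → ℝ}
    (hΔ : MemLp Δ 2 P) (hg : g =ᵐ[P] P[Δ | m])
    {h : 𝓧 → ℝ} (hh : Measurable h) (hhg : ∀ ω ∈ S, h (X ω) = g ω) :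
    eLpNorm (fun ω => S.indicator 1 ω / w (X ω) * (Δ ω - g ω) + h (X ω)) 2 P
      ≤ ENNReal.ofReal (1 / ε + (1 + ε) / ε) * eLpNorm Δ 2 P := by
  have hfirst : eLpNorm (fun ω => S.indicator 1 ω / w (X ω) * (Δ ω - g ω)) 2 P
      ≤ ENNReal.ofReal ε⁻¹ * eLpNorm Δ 2 P := by
    have hae : (fun ω => S.indicator 1 ω / w (X ω) * (Δ ω - g ω))
        =ᵐ[P] fun ω => S.indicator 1 ω / w (X ω) * (Δ ω - P[Δ | m] ω) :=
      hg.mono fun ω hω => by dsimp only; rw [hω]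
    refine (eLpNorm_congr_ae hae).trans_le (eLpNorm_mul_sub_condExp_le hm hΔ ?_)
    filter_upwards [hw_ge] with ω hω
    by_cases hωS : ω ∈ S
    · simp [Set.indicator_of_mem hωS, abs_of_pos (hε.trans_le hω)]
      gcongr
    · simp [Set.indicator_of_notMem hωS, hε.le]
  have hsecond : eLpNorm (fun ω => h (X ω)) 2 P
      ≤ ENNReal.ofReal ((1 + ε) / ε) * eLpNorm Δ 2 P := by
    have hg_le : eLpNorm (S.indicator g) 2 P ≤ eLpNorm Δ 2 P :=
      (eLpNorm_indicator_le _).trans <|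
        (eLpNorm_congr_ae hg).trans_le (eLpNorm_condExp_le_eLpNorm _ one_le_two)
    rw [← ENNReal.pow_le_pow_left_iff two_ne_zero, mul_pow, ← ENNReal.ofReal_pow (by positivity)]
    calc _ ≤ ENNReal.ofReal ε⁻¹ * eLpNorm (S.indicator g) 2 P ^ 2 :=
          Set.indicator_congr hhg ▸
            eLpNorm_comp_pow_two_le_of_ae_eq_condExp_indicator hX hw hS hw_eq hε hw_ge hh
      _ ≤ ENNReal.ofReal (((1 + ε) / ε) ^ 2) * eLpNorm Δ 2 P ^ 2 := by
          gcongr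
          rw [div_pow, le_div_iff₀ (by positivity), inv_mul_eq_div, div_le_iff₀ hε]
          nlinarith
  calc _ ≤ eLpNorm (fun ω => S.indicator 1 ω / w (X ω) * (Δ ω - g ω)) 2 P
        + eLpNorm (fun ω => h (X ω)) 2 P :=
        eLpNorm_add_le
          (((measurable_const.indicator hS).div (hw.comp hX)).aestronglyMeasurable.mul
            (hΔ.1.sub (integrable_condExp.1.congr hg.symm)))
          (hh.comp hX).aestronglyMeasurable one_le_two
    _ ≤ _ := add_le_add hfirst hsecond
    _ = _ := by rw [← add_mul, ← ENNReal.ofReal_add (by positivity) (by positivity), one_div]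

end InversePropensityWeighting

theorem statement_16_general
    {Ω 𝓧 : Type*} [MeasurableSpace Ω] [MeasurableSpace 𝓧]
    (P : Measure Ω) [IsProbabilityMeasure P]
    (Y : Ω → ℝ) (D : Ω → ℕ) (X : Ω → 𝓧)
    (hY : Measurable Y) (hD : Measurable D) (hX : Measurable X)
    (d : ℕ) (hd : d ≤ 1)
    -- the propensity score with overlap
    (p : ℕ → 𝓧 → ℝ)
    (hpmeas : Measurable (fun t : ℕ × 𝓧 => p t.1 t.2))
    (hpver : ∀ δ ≤ 1, (fun ω => p δ (X ω)) =ᵐ[P]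
      P[(fun ω' => if D ω' = δ then (1:ℝ) else 0) | MeasurableSpace.comap X inferInstance])
    (ε₁ : ℝ) (hε₁ : ε₁ ∈ Set.Ioo (0:ℝ) (1/2))
    (hoverp : ∀ δ ≤ 1, ∀ᵐ ω ∂P, ε₁ ≤ p δ (X ω) ∧ p δ (X ω) ≤ 1 - ε₁)
    -- outcome models indexed by the threshold: G_a(D,X) a version of P(Y ≤ a | D, X)
    (G : ℝ → ℕ → 𝓧 → ℝ)
    (hGmeas : ∀ a : ℝ, Measurable (fun t : ℕ × 𝓧 => G a t.1 t.2))
    (hGver : ∀ a : ℝ, (fun ω => G a (D ω) (X ω)) =ᵐ[P]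
      P[(fun ω' => if Y ω' ≤ a then (1:ℝ) else 0) |
        MeasurableSpace.comap (fun ω' => (D ω', X ω')) inferInstance])
    (a abar : ℝ) :
    eLpNorm (fun ω =>
      ((if D ω = d then (1:ℝ) else 0) / p d (X ω)
          * ((if Y ω ≤ a then (1:ℝ) else 0) - G a d (X ω))
        + G a d (X ω))
      - ((if D ω = d then (1:ℝ) else 0) / p d (X ω)
          * ((if Y ω ≤ abar then (1:ℝ) else 0) - G abar d (X ω))
        + G abar d (X ω))) 2 P
      ≤ ENNReal.ofReal (1 / ε₁ + (1 + ε₁) / ε₁)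
        * eLpNorm (fun ω =>
            (if Y ω ≤ a then (1:ℝ) else 0) - (if Y ω ≤ abar then (1:ℝ) else 0)) 2 P := by
  obtain ⟨hε, -⟩ := hε₁
  have hY_mem (b : ℝ) : MemLp (fun ω => if Y ω ≤ b then (1:ℝ) else 0) 2 P :=
    .of_bound (Measurable.ite (hY measurableSet_Iic) measurable_const
      measurable_const).aestronglyMeasurable 1 (.of_forall fun ω => by split_ifs <;> norm_num)
  have hGd (b : ℝ) : Measurable (G b d) := (hGmeas b).comp (measurable_const.prodMk measurable_id)
  have hI : (fun ω => if D ω = d then (1:ℝ) else 0) = {ω | D ω = d}.indicator 1 := by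
    ext ω; simp [Set.indicator_apply]
  have hg : (fun ω => G a (D ω) (X ω) - G abar (D ω) (X ω)) =ᵐ[P]
      P[fun ω => (if Y ω ≤ a then (1:ℝ) else 0) - (if Y ω ≤ abar then (1:ℝ) else 0) |
        MeasurableSpace.comap (fun ω => (D ω, X ω)) inferInstance] :=
    ((hGver a).sub (hGver abar)).trans
      (condExp_sub ((hY_mem a).integrable one_le_two) ((hY_mem abar).integrable one_le_two) _).symm
  refine (eLpNorm_congr_ae (.of_forall fun ω => ?_)).trans_le
    (eLpNorm_indicator_div_mul_sub_add_comp_le hX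
      (hpmeas.comp (measurable_const.prodMk measurable_id)) (hD (measurableSet_singleton d))
      (hI ▸ hpver d hd) hε ((hoverp d hd).mono fun _ h => h.1) (hD.prodMk hX).comap_le
      (Δ := fun ω => (if Y ω ≤ a then (1:ℝ) else 0) - (if Y ω ≤ abar then (1:ℝ) else 0))
      ((hY_mem a).sub (hY_mem abar)) hg (h := fun x => G a d x - G abar d x)
      ((hGd a).sub (hGd abar)) fun ω (hω : D ω = d) => by simp only [hω])
  by_cases hω : D ω = d
  · simp [hω]
    ring
  · simp [hω]

/-- Smoothness of the efficient score in the threshold `a` (case `d = d'`):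
for all thresholds `a, ā ∈ ℝ` and `d ∈ {0,1}`, the `L²(P)` distance between the doubly
robust scores at thresholds `a` and `ā` is at most
`(1/ε₁ + (1+ε₁)/ε₁)·‖Y_a − Y_ā‖_{P,2}`. -/
theorem statement_16
    {Ω 𝓧 : Type*} [MeasurableSpace Ω] [MeasurableSpace 𝓧]
    (P : Measure Ω) [IsProbabilityMeasure P]
    (Y : Ω → ℝ) (D : Ω → ℕ) (X : Ω → 𝓧)
    (hY : Measurable Y) (hD : Measurable D) (hX : Measurable X)
    (hD01 : ∀ ω, D ω ≤ 1)
    (d : ℕ) (hd : d ≤ 1)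
    -- the propensity score with overlap
    (p : ℕ → 𝓧 → ℝ)
    (hpmeas : Measurable (fun t : ℕ × 𝓧 => p t.1 t.2))
    (hpver : ∀ δ ≤ 1, (fun ω => p δ (X ω)) =ᵐ[P]
      P[(fun ω' => if D ω' = δ then (1:ℝ) else 0) | MeasurableSpace.comap X inferInstance])
    (ε₁ : ℝ) (hε₁ : ε₁ ∈ Set.Ioo (0:ℝ) (1/2))
    (hoverp : ∀ δ ≤ 1, ∀ᵐ ω ∂P, ε₁ ≤ p δ (X ω) ∧ p δ (X ω) ≤ 1 - ε₁)
    -- outcome models indexed by the threshold: G_a(D,X) a version of P(Y ≤ a | D, X)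
    (G : ℝ → ℕ → 𝓧 → ℝ)
    (hGmeas : ∀ a : ℝ, Measurable (fun t : ℕ × 𝓧 => G a t.1 t.2))
    (hGver : ∀ a : ℝ, (fun ω => G a (D ω) (X ω)) =ᵐ[P]
      P[(fun ω' => if Y ω' ≤ a then (1:ℝ) else 0) |
        MeasurableSpace.comap (fun ω' => (D ω', X ω')) inferInstance])
    (a abar : ℝ) :
    eLpNorm (fun ω =>
      ((if D ω = d then (1:ℝ) else 0) / p d (X ω)
          * ((if Y ω ≤ a then (1:ℝ) else 0) - G a d (X ω))
        + G a d (X ω))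
      - ((if D ω = d then (1:ℝ) else 0) / p d (X ω)
          * ((if Y ω ≤ abar then (1:ℝ) else 0) - G abar d (X ω))
        + G abar d (X ω))) 2 P
      ≤ ENNReal.ofReal (1 / ε₁ + (1 + ε₁) / ε₁)
        * eLpNorm (fun ω =>
            (if Y ω ≤ a then (1:ℝ) else 0) - (if Y ω ≤ abar then (1:ℝ) else 0)) 2 P :=
  statement_16_general P Y D X hY hD hX d hd p hpmeas hpver ε₁ hε₁ hoverp G hGmeas hGver a abar
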